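/- arXiv:1201.5859 — 4 statements merged into one kernel-verified Lean document; each statement's English description precedes it below -/
import Mathlib

section
/- A decorated Gauss diagram G (with integer valuations on arrows and circle) admits a non-negative refinement (an assignment of non-negative integers to its 2n edges whose sum over each distinguished loop equals that arrow's valuation and whose total equals the circle's valuation) if and only if G is weakly admissible, i.e. every nontrivial loop in G that respects the circle's orientation has non-negative total valuation (homology class in ℤ). -/
/-!
If `y` is a refinement, the class of a loop is the `y`-weight of the edges it traverses: a cycle
of the diagram differs from the combination of the distinguished loops of the arrows it crosses
by a multiple of the circle. So a non-negative refinement gives non-negative classes.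

Conversely, start from any integer refinement `y₀`. Weak admissibility says that reduced loops
have non-negative `y₀`-weight, and cancelling back-and-forth jumps extends this to all closed
walks. Hence shortest-walk distances `φ` from a base point exist; `φ` is constant along arrows and
`φ (e + 1) ≤ φ e + y₀ e`, so `y₀ - (φ (e + 1) - φ e)` is a non-negative refinement.
-/

/-- A Gauss diagram with `n` arrows: the `2n` arrow endpoints are the points of the cyclic group
`ZMod (2*n)` (listed in the cyclic order of the oriented circle), and arrow `a` points from its
underpass point `tail a` to its overpass point `head a`.  The edge `e` of the diagram is the arc
of the circle from the point `e` to the point `e + 1`. -/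
structure GaussDiagram (n : ℕ) where
  head : Fin n → ZMod (2 * n)
  tail : Fin n → ZMod (2 * n)
  inj : Function.Injective (Sum.elim head tail)

namespace GaussDiagram

variable {n : ℕ}

/-- The edge-characteristic vector of the distinguished loop of arrow `a`: it traverses the
edges from `head a` to `tail a` along the orientation of the circle (and returns along the
arrow). -/
def arcChain (G : GaussDiagram n) (a : Fin n) : ZMod (2 * n) → ℤ :=
  fun e => if (e - G.head a).val < (G.tail a - G.head a).val then 1 else 0

/-- The `(n+1) × 2n` matrix whose rows are the edge-characteristic vectors of the `n`
distinguished loops together with the full circle (the all-ones row, indexed by `none`). -/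
def loopMatrix (G : GaussDiagram n) : Matrix (Option (Fin n)) (ZMod (2 * n)) ℤ :=
  fun r e => r.elim 1 fun a => G.arcChain a e

/-- The elementary refinement move of type II+ at arrow `a`: add `+1` on the edge directly
following each endpoint of `a` and `-1` on the edge directly preceding it (with multiplicity). -/
def moveVec (G : GaussDiagram n) (a : Fin n) : ZMod (2 * n) → ℤ :=
  fun e => (if e = G.head a then 1 else 0) + (if e = G.tail a then 1 else 0)
    - (if e = G.head a - 1 then 1 else 0) - (if e = G.tail a - 1 then 1 else 0)

/-- The edge `e` (from point `e` to point `e+1`) is adjacent to the arrow `a` if one of its two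
boundary points is an endpoint of `a`. -/
def adjacent (G : GaussDiagram n) (e : ZMod (2 * n)) (a : Fin n) : Prop :=
  e = G.head a ∨ e + 1 = G.head a ∨ e = G.tail a ∨ e + 1 = G.tail a

end GaussDiagram

/-- A move of a loop in a Gauss diagram: either follow the next edge of the circle in the
direction of its orientation (`circ`), or jump along an arrow, in either direction. -/
inductive Move (n : ℕ) where
  | circ : Move n
  | jumpHT : Fin n → Move n
  | jumpTH : Fin n → Move n

/-- Whether a move is a jump along an arrow. -/
def Move.isJump {n : ℕ} : Move n → Prop
  | .circ => False
  | _ => True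

namespace GaussDiagram

/-- The point reached by performing one move starting at the point `p`. -/
def target (G : GaussDiagram n) (p : ZMod (2 * n)) : Move n → ZMod (2 * n)
  | .circ => p + 1
  | .jumpHT a => G.tail a
  | .jumpTH a => G.head a

/-- Validity of a sequence of moves starting at `p`: a jump along an arrow may only be performed
from an endpoint of that arrow. -/
def validFrom (G : GaussDiagram n) : ZMod (2 * n) → List (Move n) → Prop
  | _, [] => True
  | p, mv :: r =>
      (match mv with
        | .circ => True
        | .jumpHT a => p = G.head a
        | .jumpTH a => p = G.tail a) ∧ validFrom G (G.target p mv) r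

/-- The point reached after performing a sequence of moves from `p`. -/
def run (G : GaussDiagram n) : ZMod (2 * n) → List (Move n) → ZMod (2 * n)
  | p, [] => p
  | p, mv :: r => run G (G.target p mv) r

/-- A loop in the Gauss diagram which respects the orientation of the circle: a closed valid
sequence of moves (circle arcs are always traversed in the orientation direction, arrows may be
traversed both ways). -/
structure Loop (G : GaussDiagram n) where
  start : ZMod (2 * n)
  moves : List (Move n)
  valid : G.validFrom start moves
  closed : G.run start moves = start

/-- A loop is *reduced* (nontrivial) if it is nonempty and never backtracks: no two cyclically
consecutive moves are jumps (two consecutive jumps necessarily cancel along the same arrow). -/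
def Loop.Reduced {G : GaussDiagram n} (L : Loop G) : Prop :=
  L.moves ≠ [] ∧
  L.moves.Chain' (fun m₁ m₂ => ¬(m₁.isJump ∧ m₂.isJump)) ∧
  ∀ m₁ ∈ L.moves.getLast?, ∀ m₂ ∈ L.moves.head?, ¬(m₁.isJump ∧ m₂.isJump)

/-- Whether a sequence of moves from `p` meets a marking of the marking function `m` (which
records the number of (positive) markings on each edge). -/
def meetsFrom (G : GaussDiagram n) (m : ZMod (2 * n) → ℕ) :
    ZMod (2 * n) → List (Move n) → Prop
  | _, [] => False
  | p, .circ :: r => 0 < m p ∨ meetsFrom G m (p + 1) r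
  | _, .jumpHT a :: r => meetsFrom G m (G.tail a) r
  | _, .jumpTH a :: r => meetsFrom G m (G.head a) r

/-- A loop meets a marking if one of the circle arcs it traverses carries a marking. -/
def Loop.Meets {G : GaussDiagram n} (m : ZMod (2 * n) → ℕ) (L : Loop G) : Prop :=
  G.meetsFrom m L.start L.moves

/-- In the diagram obtained by deleting the arrows of `R`, the point `p` is directly preceded by
a marking: going backwards along the circle from `p` one finds a marking before meeting any
endpoint of a non-deleted arrow. -/
def precededBy (G : GaussDiagram n) (m : ZMod (2 * n) → ℕ) (R : Set (Fin n))
    (p : ZMod (2 * n)) : Prop :=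
  ∃ j : ℕ, 0 < m (p - 1 - (j : ZMod (2 * n))) ∧
    ∀ i < j, ∃ a ∈ R, G.head a = p - 1 - (i : ZMod (2 * n)) ∨
      G.tail a = p - 1 - (i : ZMod (2 * n))

/-- The set of arrows removed after `k` rounds of deleting the arrows of level `1` (those whose
two endpoints are both directly preceded by a marking in the current diagram). -/
def removedAt (G : GaussDiagram n) (m : ZMod (2 * n) → ℕ) : ℕ → Set (Fin n)
  | 0 => ∅
  | k + 1 => removedAt G m k ∪
      {a | G.precededBy m (removedAt G m k) (G.head a) ∧
           G.precededBy m (removedAt G m k) (G.tail a)}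

/-- An arrow has a well-defined level if it is eventually deleted in the level process. -/
def HasLevel (G : GaussDiagram n) (m : ZMod (2 * n) → ℕ) (a : Fin n) : Prop :=
  ∃ k, a ∈ G.removedAt m k

/-- The number of times a sequence of moves from `p` traverses each edge of the circle. -/
def edgeCount (G : GaussDiagram n) : ZMod (2 * n) → List (Move n) → ZMod (2 * n) → ℤ
  | _, [] => 0
  | p, .circ :: r => fun e => (if e = p then 1 else 0) + edgeCount G (p + 1) r e
  | _, .jumpHT a :: r => edgeCount G (G.tail a) r
  | _, .jumpTH a :: r => edgeCount G (G.head a) r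

/-- The net number of traversals of each arrow, counted positively in the tail-to-head
direction (the direction used by the distinguished loops). -/
def netJump {n : ℕ} : List (Move n) → Fin n → ℤ
  | [] => 0
  | .circ :: r => netJump r
  | .jumpHT a :: r => fun b => netJump r b - (if b = a then 1 else 0)
  | .jumpTH a :: r => fun b => (if b = a then 1 else 0) + netJump r b

/-- `y` is a refinement of the decorated Gauss diagram with arrow valuations `dA` and circle
valuation `d`: the sum of the markings along each distinguished loop is the corresponding
valuation, and the total sum is the valuation of the circle. -/
def IsRefinement [NeZero (2 * n)] (G : GaussDiagram n) (dA : Fin n → ℤ) (d : ℤ)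
    (y : ZMod (2 * n) → ℤ) : Prop :=
  (∀ a, ∑ e, G.arcChain a e * y e = dA a) ∧ ∑ e, y e = d

/-- The homology class in `H₁(ℝ × S¹) = ℤ` of a loop of the decorated Gauss diagram with arrow
valuations `dA` and circle valuation `d`, computed by expressing the cycle of the loop in the
basis formed by the distinguished loops and the circle. -/
def loopClass [NeZero (2 * n)] (G : GaussDiagram n) (dA : Fin n → ℤ) (d : ℤ)
    (L : Loop G) : ℤ :=
  ∑ a, netJump L.moves a * dA a +
    (G.edgeCount L.start L.moves 0 - ∑ a, netJump L.moves a * G.arcChain a 0) * d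

end GaussDiagram

namespace ZMod

variable {M : ℕ} [NeZero M]

lemma val_sub_one (x : ZMod M) : (x - 1).val = if x = 0 then M - 1 else x.val - 1 := by
  have hlt := val_lt x
  split_ifs with hx
  · have hcast : x - 1 = ((M - 1 : ℕ) : ZMod M) := by
      rw [hx, Nat.cast_sub (NeZero.pos M), natCast_self, Nat.cast_one]
    rw [hcast, val_cast_of_lt (by omega)]
  · have hpos : 0 < x.val := val_pos.2 hx
    have hcast : x - 1 = ((x.val - 1 : ℕ) : ZMod M) := by
      rw [Nat.cast_sub hpos, natCast_zmod_val, Nat.cast_one]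
    rw [hcast, val_cast_of_lt (by omega)]

/-- The indicator of the arc from `p` to `q` has discrete derivative `δ_p - δ_q`. -/
lemma arcIndicator_sub_arcIndicator_sub_one (p q e : ZMod M) :
    ((if (e - p).val < (q - p).val then 1 else 0) : ℤ)
      - (if (e - 1 - p).val < (q - p).val then 1 else 0)
      = (if e = p then 1 else 0) - (if e = q then 1 else 0) := by
  have hk := val_lt (q - p)
  have hp : e = p ↔ (e - p).val = 0 := by rw [val_eq_zero, sub_eq_zero]
  have hq : e = q ↔ (e - p).val = (q - p).val := by
    rw [(val_injective M).eq_iff, sub_left_inj]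
  simp only [sub_right_comm e 1 p, val_sub_one, hp, hq, ← val_eq_zero]
  split_ifs <;> omega

/-- Summation by parts on the cycle `ZMod M`. -/
lemma sum_mul_sub_shift_one (f g : ZMod M → ℤ) :
    ∑ e, f e * (g (e + 1) - g e) = -∑ e, (f e - f (e - 1)) * g e := by
  have hshift : ∑ e, f e * g (e + 1) = ∑ e, f (e - 1) * g e :=
    Fintype.sum_equiv (Equiv.addRight 1) _ _ fun e => by simp
  simp only [mul_sub, sub_mul, Finset.sum_sub_distrib, hshift]
  ring

lemma eq_apply_zero_of_forall_eq_apply_sub_one {f : ZMod M → ℤ} (hf : ∀ e, f e = f (e - 1))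
    (e : ZMod M) : f e = f 0 := by
  have hnat : ∀ j : ℕ, f j = f 0 := by
    intro j
    induction j with
    | zero => simp
    | succ j ih => rw [hf, Nat.cast_succ, add_sub_cancel_right, ih]
  simpa using hnat e.val

end ZMod

namespace GaussDiagram

section Walks

variable {n : ℕ} (G : GaussDiagram n)

lemma head_ne_tail (a b : Fin n) : G.head a ≠ G.tail b := fun h => Sum.inl_ne_inr (G.inj h)

lemma head_injective : Function.Injective G.head := fun _ _ h => Sum.inl_injective (G.inj h)

lemma tail_injective : Function.Injective G.tail := fun _ _ h => Sum.inr_injective (G.inj h)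

lemma exists_eq_on_endpoints {α : Type*} [Zero α] (f g : Fin n → α) :
    ∃ ψ : ZMod (2 * n) → α, ∀ a, ψ (G.head a) = f a ∧ ψ (G.tail a) = g a :=
  ⟨Function.extend (Sum.elim G.head G.tail) (Sum.elim f g) 0, fun a =>
    ⟨G.inj.extend_apply _ _ (Sum.inl a), G.inj.extend_apply _ _ (Sum.inr a)⟩⟩

lemma run_append (s t : List (Move n)) (p : ZMod (2 * n)) :
    G.run p (s ++ t) = G.run (G.run p s) t := by
  induction s generalizing p with
  | nil => rfl
  | cons mv s ih => exact ih _

lemma validFrom_append (s t : List (Move n)) (p : ZMod (2 * n)) :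
    G.validFrom p (s ++ t) ↔ G.validFrom p s ∧ G.validFrom (G.run p s) t := by
  induction s generalizing p with
  | nil => simp [validFrom, run]
  | cons mv s ih => simp only [List.cons_append, validFrom, run, ih, and_assoc]

lemma edgeCount_append (s t : List (Move n)) (p : ZMod (2 * n)) :
    G.edgeCount p (s ++ t) = G.edgeCount p s + G.edgeCount (G.run p s) t := by
  induction s generalizing p with
  | nil => ext; simp [edgeCount, run]
  | cons mv s ih =>
    rcases mv with _ | a | a
    · ext e; simp only [List.cons_append, edgeCount, run, target, ih, Pi.add_apply, add_assoc]
    · exact ih _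
    · exact ih _

lemma edgeCount_nonneg (ms : List (Move n)) (p e : ZMod (2 * n)) : 0 ≤ G.edgeCount p ms e := by
  induction ms generalizing p with
  | nil => simp [edgeCount]
  | cons mv ms ih =>
    rcases mv with _ | a | a
    · exact add_nonneg (by positivity) (ih _)
    · exact ih _
    · exact ih _

lemma edgeCount_cons_of_isJump {mv : Move n} (h : mv.isJump) (r : List (Move n))
    (p : ZMod (2 * n)) : G.edgeCount p (mv :: r) = G.edgeCount (G.target p mv) r := by
  rcases mv with _ | a | a
  · exact h.elim
  · rfl
  · rfl

lemma target_ne_of_isJump {mv : Move n} (h : mv.isJump) {p : ZMod (2 * n)} {r : List (Move n)}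
    (hv : G.validFrom p (mv :: r)) : G.target p mv ≠ p := by
  rcases mv with _ | a | a
  · exact h.elim
  · exact fun h' => G.head_ne_tail a a (hv.1.symm.trans h'.symm)
  · exact fun h' => G.head_ne_tail a a (h'.trans hv.1)

/-- Two consecutive jumps run along the same arrow, back and forth. -/
lemma target_target_of_isJump {m₁ m₂ : Move n} (h₁ : m₁.isJump) (h₂ : m₂.isJump)
    {p : ZMod (2 * n)} {r : List (Move n)} (hv : G.validFrom p (m₁ :: m₂ :: r)) :
    G.target (G.target p m₁) m₂ = p := by
  obtain ⟨hv₁, hv₂, -⟩ := hv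
  rcases m₁ with _ | a | a <;> rcases m₂ with _ | b | b <;>
    simp only [Move.isJump, target] at h₁ h₂ hv₁ hv₂ ⊢
  · exact (G.head_ne_tail b a hv₂.symm).elim
  · rw [← G.tail_injective hv₂, hv₁]
  · rw [← G.head_injective hv₂, hv₁]
  · exact (G.head_ne_tail a b hv₂).elim

lemma cancel_jumps {m₁ m₂ : Move n} (h₁ : m₁.isJump) (h₂ : m₂.isJump) {p : ZMod (2 * n)}
    {r : List (Move n)} (hv : G.validFrom p (m₁ :: m₂ :: r)) :
    G.validFrom p r ∧ G.run p (m₁ :: m₂ :: r) = G.run p r ∧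
      G.edgeCount p (m₁ :: m₂ :: r) = G.edgeCount p r := by
  have hback := G.target_target_of_isJump h₁ h₂ hv
  refine ⟨hback ▸ hv.2.2, congrArg (G.run · r) hback, ?_⟩
  rw [G.edgeCount_cons_of_isJump h₁, G.edgeCount_cons_of_isJump h₂, hback]

lemma rotate_closed {s t : List (Move n)} {p : ZMod (2 * n)} (hv : G.validFrom p (s ++ t))
    (hc : G.run p (s ++ t) = p) :
    G.validFrom (G.run p s) (t ++ s) ∧ G.run (G.run p s) (t ++ s) = G.run p s ∧
      G.edgeCount (G.run p s) (t ++ s) = G.edgeCount p (s ++ t) := by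
  rw [G.run_append] at hc
  rw [G.validFrom_append] at hv ⊢
  rw [G.run_append, G.edgeCount_append, G.edgeCount_append, hc, add_comm]
  exact ⟨⟨hv.2, hv.1⟩, rfl, rfl⟩

lemma sum_netJump_cons_jumpHT_mul (a : Fin n) (r : List (Move n)) (f : Fin n → ℤ) :
    ∑ b, netJump (Move.jumpHT a :: r) b * f b = ∑ b, netJump r b * f b - f a := by
  simp [netJump, sub_mul, Finset.sum_sub_distrib]

lemma sum_netJump_cons_jumpTH_mul (a : Fin n) (r : List (Move n)) (f : Fin n → ℤ) :
    ∑ b, netJump (Move.jumpTH a :: r) b * f b = f a + ∑ b, netJump r b * f b := by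
  simp [netJump, add_mul, Finset.sum_add_distrib]

lemma validFrom_replicate_circ (k : ℕ) (p : ZMod (2 * n)) :
    G.validFrom p (List.replicate k .circ) := by
  induction k generalizing p with
  | zero => trivial
  | succ k ih => exact ⟨trivial, ih _⟩

lemma run_replicate_circ (k : ℕ) (p : ZMod (2 * n)) :
    G.run p (List.replicate k .circ) = p + k := by
  induction k generalizing p with
  | zero => simp [run]
  | succ k ih =>
    rw [List.replicate_succ, run, ih, target]
    push_cast
    ring

variable {G}

lemma Loop.exists_shorter_of_not_isChain (L : Loop G)
    (h : ¬L.moves.IsChain fun m₁ m₂ => ¬(m₁.isJump ∧ m₂.isJump)) :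
    ∃ L' : Loop G, L'.moves.length < L.moves.length ∧
      G.edgeCount L'.start L'.moves = G.edgeCount L.start L.moves := by
  obtain ⟨q, c, hv, hc⟩ := L
  simp only [List.isChain_iff_forall_rel_of_append_cons_cons, not_forall, not_not] at h
  obtain ⟨m₁, m₂, u, v, rfl, hj₁, hj₂⟩ := h
  rw [G.validFrom_append] at hv
  obtain ⟨hvv, hrun, hcount⟩ := G.cancel_jumps hj₁ hj₂ hv.2
  refine ⟨⟨q, u ++ v, (G.validFrom_append _ _ _).2 ⟨hv.1, hvv⟩, ?_⟩, by simp, ?_⟩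
  · rwa [G.run_append, ← hrun, ← G.run_append]
  · simp only [G.edgeCount_append, hcount]

lemma Loop.exists_shorter_of_isJump_getLast_head (L : Loop G) {m₁ m₂ : Move n}
    (h₁ : m₁ ∈ L.moves.getLast?) (h₂ : m₂ ∈ L.moves.head?) (hj₁ : m₁.isJump) (hj₂ : m₂.isJump) :
    ∃ L' : Loop G, L'.moves.length < L.moves.length ∧
      G.edgeCount L'.start L'.moves = G.edgeCount L.start L.moves := by
  obtain ⟨q, c, hv, hc⟩ := L
  obtain ⟨rest, rfl⟩ : ∃ rest, c = m₂ :: rest := by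
    cases c with
    | nil => simp at h₂
    | cons m rest => exact ⟨rest, by simp_all⟩
  rcases rest.eq_nil_or_concat' with rfl | ⟨mid, m, rfl⟩
  · exact absurd hc (G.target_ne_of_isJump hj₂ hv)
  obtain rfl : m = m₁ := by
    rw [List.getLast?_cons, List.getLast?_append] at h₁
    simpa using h₁
  -- rotating the loop makes the two jumps adjacent
  obtain ⟨hv', hc', hcount'⟩ := G.rotate_closed (s := m₂ :: mid) (t := [m]) hv hc
  obtain ⟨hvmid, hrun, hcount⟩ := G.cancel_jumps hj₁ hj₂ hv'
  exact ⟨⟨_, mid, hvmid, hrun ▸ hc'⟩, by simp, hcount.symm.trans hcount'⟩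

lemma Loop.exists_shorter_of_not_reduced (L : Loop G) (hne : L.moves ≠ []) (hL : ¬L.Reduced) :
    ∃ L' : Loop G, L'.moves.length < L.moves.length ∧
      G.edgeCount L'.start L'.moves = G.edgeCount L.start L.moves := by
  by_cases hchain : L.moves.IsChain fun m₁ m₂ => ¬(m₁.isJump ∧ m₂.isJump)
  · have hwrap : ¬∀ m₁ ∈ L.moves.getLast?, ∀ m₂ ∈ L.moves.head?, ¬(m₁.isJump ∧ m₂.isJump) :=
      fun hwrap => hL ⟨hne, hchain, hwrap⟩
    push Not at hwrap
    obtain ⟨m₁, h₁, m₂, h₂, hj₁, hj₂⟩ := hwrap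
    exact L.exists_shorter_of_isJump_getLast_head h₁ h₂ hj₁ hj₂
  · exact L.exists_shorter_of_not_isChain hchain

end Walks

instance {n : ℕ} : Finite (Move n) :=
  Finite.of_injective (fun mv : Move n => match mv with
    | .circ => (none : Option (Fin n ⊕ Fin n))
    | .jumpHT a => some (Sum.inl a)
    | .jumpTH a => some (Sum.inr a))
    (by rintro (_ | a | a) (_ | b | b) h <;> simp_all)

section Weights

variable {n : ℕ} [NeZero (2 * n)] (G : GaussDiagram n)

def walkWeight (y : ZMod (2 * n) → ℤ) (p : ZMod (2 * n)) (ms : List (Move n)) : ℤ :=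
  ∑ e, G.edgeCount p ms e * y e

lemma walkWeight_append (y : ZMod (2 * n) → ℤ) (s t : List (Move n)) (p : ZMod (2 * n)) :
    G.walkWeight y p (s ++ t) = G.walkWeight y p s + G.walkWeight y (G.run p s) t := by
  simp only [walkWeight, edgeCount_append, Pi.add_apply, add_mul, Finset.sum_add_distrib]

lemma walkWeight_nonneg {y : ZMod (2 * n) → ℤ} (hy : ∀ e, 0 ≤ y e) (p : ZMod (2 * n))
    (ms : List (Move n)) : 0 ≤ G.walkWeight y p ms :=
  Finset.sum_nonneg fun e _ => mul_nonneg (G.edgeCount_nonneg ms p e) (hy e)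

lemma arcChain_sub_arcChain_sub_one (a : Fin n) (e : ZMod (2 * n)) :
    G.arcChain a e - G.arcChain a (e - 1)
      = (if e = G.head a then 1 else 0) - (if e = G.tail a then 1 else 0) :=
  ZMod.arcIndicator_sub_arcIndicator_sub_one _ _ _

/-- Up to the distinguished loops of the arrows it crosses, a walk from `p` to `q` has boundary
`δ_p - δ_q`. -/
lemma edgeCount_boundary {p : ZMod (2 * n)} {ms : List (Move n)} (hv : G.validFrom p ms)
    (e : ZMod (2 * n)) :
    G.edgeCount p ms e - G.edgeCount p ms (e - 1)
      - ∑ a, netJump ms a * (G.arcChain a e - G.arcChain a (e - 1))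
      = (if e = p then 1 else 0) - (if e = G.run p ms then 1 else 0) := by
  induction ms generalizing p with
  | nil => rw [run]; simp [edgeCount, netJump]
  | cons mv r ih =>
    have ih := ih hv.2
    rw [run]
    rcases mv with _ | a | a
    · have hshift : (if e - 1 = p then 1 else 0 : ℤ) = if e = p + 1 then 1 else 0 := by
        simp only [sub_eq_iff_eq_add]
      rw [target] at ih ⊢
      simp only [edgeCount, netJump, hshift]
      linear_combination ih
    · obtain rfl : p = G.head a := hv.1
      rw [target] at ih ⊢
      simp only [edgeCount, sum_netJump_cons_jumpHT_mul, arcChain_sub_arcChain_sub_one] at ih ⊢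
      linear_combination ih
    · obtain rfl : p = G.tail a := hv.1
      rw [target] at ih ⊢
      simp only [edgeCount, sum_netJump_cons_jumpTH_mul, arcChain_sub_arcChain_sub_one] at ih ⊢
      linear_combination ih

variable {G} in
/-- A loop minus the distinguished loops of the arrows it crosses has no boundary, so it is a
multiple of the circle. -/
lemma Loop.edgeCount_eq (L : Loop G) (e : ZMod (2 * n)) :
    G.edgeCount L.start L.moves e = ∑ a, netJump L.moves a * G.arcChain a e
      + (G.edgeCount L.start L.moves 0 - ∑ a, netJump L.moves a * G.arcChain a 0) := by
  have hconst := ZMod.eq_apply_zero_of_forall_eq_apply_sub_one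
    (f := fun e => G.edgeCount L.start L.moves e - ∑ a, netJump L.moves a * G.arcChain a e)
    (fun e => by
      have h := G.edgeCount_boundary L.valid e
      rw [L.closed, sub_self] at h
      simp only [mul_sub, Finset.sum_sub_distrib] at h
      linarith) e
  linarith

lemma loopClass_eq_walkWeight {dA : Fin n → ℤ} {d : ℤ} {y : ZMod (2 * n) → ℤ}
    (hy : G.IsRefinement dA d y) (L : Loop G) :
    G.loopClass dA d L = G.walkWeight y L.start L.moves := by
  set c := G.edgeCount L.start L.moves 0 - ∑ a, netJump L.moves a * G.arcChain a 0
  calc G.loopClass dA d L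
      = ∑ a, netJump L.moves a * ∑ e, G.arcChain a e * y e + c * ∑ e, y e := by
        simp only [loopClass, hy.1, hy.2]; rfl
    _ = ∑ e, (∑ a, netJump L.moves a * G.arcChain a e + c) * y e := by
        simp only [add_mul, Finset.sum_add_distrib, Finset.mul_sum, Finset.sum_mul, mul_assoc]
        rw [Finset.sum_comm]
    _ = G.walkWeight y L.start L.moves :=
        Finset.sum_congr rfl fun e _ => by rw [L.edgeCount_eq e]

lemma walkWeight_circ (y : ZMod (2 * n) → ℤ) (p : ZMod (2 * n)) :
    G.walkWeight y p [.circ] = y p := by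
  simp [walkWeight, edgeCount]

lemma walkWeight_jump (y : ZMod (2 * n) → ℤ) (p : ZMod (2 * n)) {mv : Move n} (h : mv.isJump) :
    G.walkWeight y p [mv] = 0 := by
  simp [walkWeight, G.edgeCount_cons_of_isJump h, edgeCount]

lemma exists_closed_infix {p : ZMod (2 * n)} {ms : List (Move n)} (hlen : 2 * n ≤ ms.length) :
    ∃ u c v, ms = u ++ c ++ v ∧ c ≠ [] ∧ G.run (G.run p u) c = G.run p u := by
  have hcard : Fintype.card (ZMod (2 * n)) < Fintype.card (Fin (ms.length + 1)) := by
    rw [ZMod.card, Fintype.card_fin]; omega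
  obtain ⟨i, j, hne, hij⟩ :=
    Fintype.exists_ne_map_eq_of_card_lt (fun i : Fin (ms.length + 1) => G.run p (ms.take i)) hcard
  wlog hlt : i < j generalizing i j
  · exact this j i hne.symm hij.symm (lt_of_le_of_ne (not_lt.1 hlt) hne.symm)
  have hlt' : (i : ℕ) < j := hlt
  have hj : (j : ℕ) ≤ ms.length := Nat.lt_succ_iff.1 j.2
  have htake : ms.take i ++ (ms.take j).drop i = ms.take j := by
    conv_rhs => rw [← List.take_append_drop i (ms.take j), List.take_take,
      min_eq_left hlt'.le]
  refine ⟨ms.take i, (ms.take j).drop i, ms.drop j, ?_, ?_, ?_⟩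
  · rw [htake, List.take_append_drop]
  · rw [ne_eq, ← List.length_eq_zero_iff, List.length_drop, List.length_take]
    omega
  · rw [← G.run_append, htake]
    exact hij.symm

variable {G} {y : ZMod (2 * n) → ℤ}

lemma Loop.walkWeight_nonneg_of_reduced
    (hred : ∀ L : Loop G, L.Reduced → 0 ≤ G.walkWeight y L.start L.moves) (L : Loop G) :
    0 ≤ G.walkWeight y L.start L.moves := by
  induction hlen : L.moves.length using Nat.strong_induction_on generalizing L with
  | _ k ih =>
    by_cases hL : L.Reduced
    · exact hred L hL
    by_cases hne : L.moves = []
    · simp [walkWeight, hne, edgeCount]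
    obtain ⟨L', hlt, hcount⟩ := L.exists_shorter_of_not_reduced hne hL
    rw [walkWeight, ← hcount]
    exact ih _ (hlen ▸ hlt) L' rfl

lemma exists_short_walk (hclosed : ∀ L : Loop G, 0 ≤ G.walkWeight y L.start L.moves)
    {p : ZMod (2 * n)} {ms : List (Move n)} (hv : G.validFrom p ms) :
    ∃ ms', G.validFrom p ms' ∧ G.run p ms' = G.run p ms ∧ ms'.length < 2 * n ∧
      G.walkWeight y p ms' ≤ G.walkWeight y p ms := by
  induction hlen : ms.length using Nat.strong_induction_on generalizing ms with
  | _ k ih =>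
    by_cases hshort : ms.length < 2 * n
    · exact ⟨ms, hv, rfl, hshort, le_rfl⟩
    obtain ⟨u, c, v, rfl, hc, hcyc⟩ := G.exists_closed_infix (p := p) (not_lt.1 hshort)
    simp only [G.validFrom_append, G.run_append, hcyc] at hv
    obtain ⟨⟨hvu, hvc⟩, hvv⟩ := hv
    have hcut : G.validFrom p (u ++ v) := (G.validFrom_append _ _ _).2 ⟨hvu, hvv⟩
    obtain ⟨ms', hv', hrun', hlen', hw'⟩ :=
      ih (u ++ v).length (by simp [← hlen, List.length_pos_iff.2 hc]) hcut rfl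
    refine ⟨ms', hv', by simp [hrun', G.run_append, hcyc], hlen', ?_⟩
    have hwc := hclosed ⟨_, c, hvc, hcyc⟩
    simp only [G.walkWeight_append, G.run_append, hcyc] at hw' ⊢
    linarith

lemma exists_minimal_walk (hclosed : ∀ L : Loop G, 0 ≤ G.walkWeight y L.start L.moves)
    (p : ZMod (2 * n)) :
    ∃ ms, G.validFrom 0 ms ∧ G.run 0 ms = p ∧ ∀ ms', G.validFrom 0 ms' → G.run 0 ms' = p →
      G.walkWeight y 0 ms ≤ G.walkWeight y 0 ms' := by
  set S := {ms : List (Move n) | G.validFrom 0 ms ∧ G.run 0 ms = p ∧ ms.length < 2 * n}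
  have hfin : S.Finite := (List.finite_length_lt (Move n) (2 * n)).subset fun _ h => h.2.2
  have hne : S.Nonempty := by
    obtain ⟨ms, hv, hrun, hlen, -⟩ :=
      exists_short_walk hclosed (G.validFrom_replicate_circ p.val 0)
    refine ⟨ms, hv, ?_, hlen⟩
    simp [hrun, run_replicate_circ]
  obtain ⟨ms₀, ⟨hv₀, hrun₀, -⟩, hmin⟩ := S.exists_min_image (G.walkWeight y 0) hfin hne
  refine ⟨ms₀, hv₀, hrun₀, fun ms hv hrun => ?_⟩
  obtain ⟨ms', hv', hrun', hlen', hw'⟩ := exists_short_walk hclosed hv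
  exact (hmin ms' ⟨hv', hrun'.trans hrun, hlen'⟩).trans hw'

/-- `φ p` is the least weight of a walk from `0` to `p`. -/
lemma exists_potential (hclosed : ∀ L : Loop G, 0 ≤ G.walkWeight y L.start L.moves) :
    ∃ φ : ZMod (2 * n) → ℤ, (∀ e, φ (e + 1) ≤ φ e + y e) ∧ ∀ a, φ (G.tail a) = φ (G.head a) := by
  choose best hvalid hrun hmin using exists_minimal_walk hclosed
  have hstep : ∀ p mv, G.validFrom p [mv] → G.walkWeight y 0 (best (G.target p mv))
      ≤ G.walkWeight y 0 (best p) + G.walkWeight y p [mv] := fun p mv hv => by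
    have h := hmin (G.target p mv) (best p ++ [mv])
      ((G.validFrom_append _ _ _).2 ⟨hvalid p, (hrun p).symm ▸ hv⟩)
      (by rw [G.run_append, hrun]; rfl)
    rwa [G.walkWeight_append, hrun] at h
  refine ⟨fun p => G.walkWeight y 0 (best p), fun e => ?_, fun a => le_antisymm ?_ ?_⟩
  · simpa [target, walkWeight_circ] using hstep e .circ ⟨trivial, trivial⟩
  · simpa [target, G.walkWeight_jump y _ (mv := .jumpHT a) trivial]
      using hstep (G.head a) (.jumpHT a) ⟨rfl, trivial⟩
  · simpa [target, G.walkWeight_jump y _ (mv := .jumpTH a) trivial]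
      using hstep (G.tail a) (.jumpTH a) ⟨rfl, trivial⟩

end Weights

section Refinements

variable {n : ℕ}

/-- Every edge vector with total `d` has this form, `ψ` being its partial sums along the circle. -/
def potentialRefinement (d : ℤ) (ψ : ZMod (2 * n) → ℤ) (e : ZMod (2 * n)) : ℤ :=
  ψ (e + 1) - ψ e + if e = -1 then d else 0

variable [NeZero (2 * n)] (G : GaussDiagram n)

lemma sum_arcChain_mul_sub (a : Fin n) (ψ : ZMod (2 * n) → ℤ) :
    ∑ e, G.arcChain a e * (ψ (e + 1) - ψ e) = ψ (G.tail a) - ψ (G.head a) := by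
  simp [ZMod.sum_mul_sub_shift_one, arcChain_sub_arcChain_sub_one, sub_mul,
    Finset.sum_sub_distrib]

lemma isRefinement_potentialRefinement {dA : Fin n → ℤ} {d : ℤ} {ψ : ZMod (2 * n) → ℤ}
    (hψ : ∀ a, ψ (G.tail a) - ψ (G.head a) + d * G.arcChain a (-1) = dA a) :
    G.IsRefinement dA d (potentialRefinement d ψ) := by
  refine ⟨fun a => ?_, ?_⟩
  · simp only [potentialRefinement, mul_add, Finset.sum_add_distrib, sum_arcChain_mul_sub,
      mul_ite, mul_zero, Finset.sum_ite_eq', Finset.mem_univ, if_true, ← hψ a]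
    ring
  · simpa [potentialRefinement, Finset.sum_add_distrib] using
      ZMod.sum_mul_sub_shift_one (fun _ => 1) ψ

end Refinements

end GaussDiagram

/-- A decorated Gauss diagram admits a non-negative refinement if and only if it is weakly
admissible: every nontrivial orientation-respecting loop has non-negative homology class. -/
theorem stmt13 (n : ℕ) [NeZero (2 * n)] (G : GaussDiagram n) (dA : Fin n → ℤ) (d : ℤ) :
    (∃ y, G.IsRefinement dA d y ∧ ∀ e, 0 ≤ y e) ↔
      ∀ L : GaussDiagram.Loop G, L.Reduced → 0 ≤ G.loopClass dA d L := by
  constructor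
  · rintro ⟨y, hy, hpos⟩ L -
    rw [G.loopClass_eq_walkWeight hy L]
    exact G.walkWeight_nonneg hpos _ _
  · intro H
    obtain ⟨ψ, hψ⟩ := G.exists_eq_on_endpoints 0 fun a => dA a - d * G.arcChain a (-1)
    have hψ' : ∀ a, ψ (G.tail a) - ψ (G.head a) + d * G.arcChain a (-1) = dA a := fun a => by
      simp [hψ]
    have hclosed := GaussDiagram.Loop.walkWeight_nonneg_of_reduced fun L hL =>
      G.loopClass_eq_walkWeight (G.isRefinement_potentialRefinement hψ') L ▸ H L hL
    obtain ⟨φ, hstep, harrow⟩ := GaussDiagram.exists_potential hclosed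
    refine ⟨GaussDiagram.potentialRefinement d (ψ - φ),
      G.isRefinement_potentialRefinement fun a => by simp [harrow, ← hψ' a], fun e => ?_⟩
    have := hstep e
    simp only [GaussDiagram.potentialRefinement, Pi.sub_apply] at this ⊢
    linarith
end

section
/- Let v₀ ∈ ℤ^n have all coordinates non-zero and let V ⊆ ℤ^n be a submodule with property 𝔓, φ : V → ℤ a homomorphism with φ(V_{v₀}) ⊆ ℕ. Fix i with e_i ∉ V and suppose ε_i(v₀) = +1. Define 𝒦₋₁ = {φ(v) : v ∈ V, v − e_i ∈ W_{v₀}} and 𝒦₊₁ = {−φ(v) : v ∈ V, v + e_i ∈ W_{v₀}}, where W = V ⊕ ℤe_i. Then both sets are non-empty, every element of 𝒦₋₁ is ≥ 0, sup 𝒦₊₁ ≤ inf 𝒦₋₁, and both sup and inf are finite; consequently setting ψ|_V = φ and ψ(e_i) = inf 𝒦₋₁ defines a homomorphism ψ : W → ℤ with ψ(w) ≥ 0 for all w ∈ W_{v₀} with the e_i-coefficient of w in {−1,0,+1}. -/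
/-- A *unit* of `ι → ℤ`: all coordinates lie in `{-1, 0, 1}`. -/
def IsUnitVec {ι : Type*} (u : ι → ℤ) : Prop := ∀ i, u i = -1 ∨ u i = 0 ∨ u i = 1

/-- `cone V v` is `V_v = V ∩ ⨁ ε_i(v)·ℕ·e_i`: the elements of `V` whose `i`-th coordinate is a
non-negative multiple of `sign (v i)` for every `i`. -/
def cone {ι : Type*} (V : Submodule ℤ (ι → ℤ)) (v : ι → ℤ) : Set (ι → ℤ) :=
  {x | x ∈ V ∧ ∀ i, ∃ k : ℕ, x i = (k : ℤ) * Int.sign (v i)}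

/-- Property `𝔓`: for each `x ∈ V`, every element of `V_x` is a finite sum (with repetitions
allowed) of units lying in `V_x`. -/
def HasP {ι : Type*} (V : Submodule ℤ (ι → ℤ)) : Prop :=
  ∀ x ∈ V, ∀ y ∈ cone V x, ∃ l : Multiset (ι → ℤ),
    (∀ u ∈ l, IsUnitVec u ∧ u ∈ cone V x) ∧ l.sum = y

/-- One extension step of the extension lemma: with `W = V ⊕ ℤ·e_i`, `ε_i(v₀) = +1`, and the
sets `𝒦₋₁ = {φ(v) : v - e_i ∈ W_{v₀}}`, `𝒦₊₁ = {-φ(v) : v + e_i ∈ W_{v₀}}`, both sets are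
nonempty, `𝒦₋₁ ⊆ ℕ`, `sup 𝒦₊₁ ≤ inf 𝒦₋₁` with both finite, and setting `ψ|_V = φ`,
`ψ(e_i) = inf 𝒦₋₁` defines a homomorphism `ψ : W → ℤ` which is non-negative on the elements of
`W_{v₀}` whose `e_i`-coefficient lies in `{-1, 0, 1}`. -/
theorem stmt15 {n : ℕ} (V : Submodule ℤ (Fin n → ℤ)) (hP : HasP V)
    (v₀ : Fin n → ℤ) (hv₀ : v₀ ∈ V) (hnz : ∀ j, v₀ j ≠ 0)
    (φ : V →+ ℤ) (hφ : ∀ x : V, (x : Fin n → ℤ) ∈ cone V v₀ → 0 ≤ φ x)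
    (i : Fin n) (hi : Pi.single i (1 : ℤ) ∉ V)
    (hdisj : ∀ k : ℤ, k • Pi.single i (1 : ℤ) ∈ V → k = 0)
    (hsign : 0 < v₀ i)
    (W : Submodule ℤ (Fin n → ℤ)) (hW : W = V ⊔ Submodule.span ℤ {Pi.single i (1 : ℤ)})
    (Kneg Kpos : Set ℤ)
    (hKneg : Kneg = {z | ∃ v, ∃ hv : v ∈ V, z = φ ⟨v, hv⟩ ∧
      v - Pi.single i (1 : ℤ) ∈ cone W v₀})
    (hKpos : Kpos = {z | ∃ v, ∃ hv : v ∈ V, z = -φ ⟨v, hv⟩ ∧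
      v + Pi.single i (1 : ℤ) ∈ cone W v₀}) :
    Kneg.Nonempty ∧ Kpos.Nonempty ∧ (∀ z ∈ Kneg, 0 ≤ z) ∧
    BddBelow Kneg ∧ BddAbove Kpos ∧ sSup Kpos ≤ sInf Kneg ∧
    ∃ ψ : W →+ ℤ,
      (∀ (v : Fin n → ℤ) (hv : v ∈ V),
        ψ ⟨v, by rw [hW]; exact Submodule.mem_sup_left hv⟩ = φ ⟨v, hv⟩) ∧
      ψ ⟨Pi.single i (1 : ℤ), by
        rw [hW]; exact Submodule.mem_sup_right (Submodule.mem_span_singleton_self _)⟩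
        = sInf Kneg ∧
      ∀ w : W, (w : Fin n → ℤ) ∈ cone W v₀ →
        (∃ k : ℤ, (k = -1 ∨ k = 0 ∨ k = 1) ∧
          (w : Fin n → ℤ) - k • Pi.single i (1 : ℤ) ∈ V) →
        0 ≤ ψ w := by
  classical
  set e : Fin n → ℤ := Pi.single i (1 : ℤ) with he
  have hsi : Int.sign (v₀ i) = 1 := Int.sign_eq_one_of_pos hsign
  have hss : ∀ j, Int.sign (v₀ j) * Int.sign (v₀ j) = 1 := by
    intro j
    rcases lt_trichotomy (v₀ j) 0 with h | h | h
    · rw [Int.sign_eq_neg_one_of_neg h]; norm_num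
    · exact absurd h (hnz j)
    · rw [Int.sign_eq_one_of_pos h]; norm_num
  have hcone_iff : ∀ x : Fin n → ℤ,
      (∀ j, ∃ k : ℕ, x j = (k : ℤ) * Int.sign (v₀ j)) ↔
      (∀ j, 0 ≤ x j * Int.sign (v₀ j)) := by
    intro x
    constructor
    · intro h j
      obtain ⟨k, hk⟩ := h j
      rw [hk, mul_assoc, hss j, mul_one]
      exact Int.natCast_nonneg k
    · intro h j
      have hj := h j
      rcases lt_trichotomy (v₀ j) 0 with hc | hc | hc
      · rw [Int.sign_eq_neg_one_of_neg hc] at hj ⊢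
        exact ⟨(x j).natAbs, by omega⟩
      · exact absurd hc (hnz j)
      · rw [Int.sign_eq_one_of_pos hc] at hj ⊢
        exact ⟨(x j).natAbs, by omega⟩
  have hmemC : ∀ (U : Submodule ℤ (Fin n → ℤ)) (x : Fin n → ℤ),
      x ∈ cone U v₀ ↔ x ∈ U ∧ ∀ j, 0 ≤ x j * Int.sign (v₀ j) := by
    intro U x
    unfold cone
    simp only [Set.mem_setOf_eq]
    exact and_congr_right fun _ => hcone_iff x
  have heW : e ∈ W := by
    rw [hW]; exact Submodule.mem_sup_right (Submodule.mem_span_singleton_self _)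
  have hVW : ∀ x, x ∈ V → x ∈ W := by
    intro x hx; rw [hW]; exact Submodule.mem_sup_left hx
  -- key comparison
  have hkey : ∀ z₁ ∈ Kpos, ∀ z₂ ∈ Kneg, z₁ ≤ z₂ := by
    intro z₁ hz₁ z₂ hz₂
    rw [hKpos] at hz₁; rw [hKneg] at hz₂
    obtain ⟨v₁, hv₁, rfl, hc₁⟩ := hz₁
    obtain ⟨v₂, hv₂, rfl, hc₂⟩ := hz₂
    have hc₁' := ((hmemC W _).mp hc₁).2
    have hc₂' := ((hmemC W _).mp hc₂).2
    have hsum : (v₁ + v₂ : Fin n → ℤ) ∈ cone V v₀ := by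
      rw [hmemC]
      refine ⟨add_mem hv₁ hv₂, fun j => ?_⟩
      have h1 := hc₁' j
      have h2 := hc₂' j
      simp only [Pi.add_apply, Pi.sub_apply] at h1 h2 ⊢
      nlinarith [h1, h2]
    have : (0 : ℤ) ≤ φ ⟨v₁ + v₂, add_mem hv₁ hv₂⟩ := hφ _ hsum
    have hsplit : (⟨v₁ + v₂, add_mem hv₁ hv₂⟩ : V) = ⟨v₁, hv₁⟩ + ⟨v₂, hv₂⟩ := rfl
    rw [hsplit, map_add] at this
    linarith
  -- nonemptiness witnesses
  have hKn1 : φ ⟨v₀, hv₀⟩ ∈ Kneg := by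
    rw [hKneg]
    refine ⟨v₀, hv₀, rfl, ?_⟩
    rw [hmemC]
    refine ⟨sub_mem (hVW _ hv₀) heW, fun j => ?_⟩
    by_cases hj : j = i
    · subst hj
      simp only [Pi.sub_apply, he, Pi.single_eq_same, hsi, mul_one]
      omega
    · simp only [Pi.sub_apply, he, Pi.single_eq_of_ne hj, sub_zero]
      have := hss j
      rcases lt_trichotomy (v₀ j) 0 with hc | hc | hc
      · rw [Int.sign_eq_neg_one_of_neg hc]; omega
      · exact absurd hc (hnz j)
      · rw [Int.sign_eq_one_of_pos hc]; omega
  have hKp1 : -φ ⟨v₀, hv₀⟩ ∈ Kpos := by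
    rw [hKpos]
    refine ⟨v₀, hv₀, rfl, ?_⟩
    rw [hmemC]
    refine ⟨add_mem (hVW _ hv₀) heW, fun j => ?_⟩
    by_cases hj : j = i
    · subst hj
      simp only [Pi.add_apply, he, Pi.single_eq_same, hsi, mul_one]
      omega
    · simp only [Pi.add_apply, he, Pi.single_eq_of_ne hj, add_zero]
      rcases lt_trichotomy (v₀ j) 0 with hc | hc | hc
      · rw [Int.sign_eq_neg_one_of_neg hc]; omega
      · exact absurd hc (hnz j)
      · rw [Int.sign_eq_one_of_pos hc]; omega
  have hKnne : Kneg.Nonempty := ⟨_, hKn1⟩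
  have hKpne : Kpos.Nonempty := ⟨_, hKp1⟩
  -- nonnegativity of Kneg
  have hKnpos : ∀ z ∈ Kneg, 0 ≤ z := by
    intro z hz
    rw [hKneg] at hz
    obtain ⟨v, hv, rfl, hc⟩ := hz
    have hc' := ((hmemC W _).mp hc).2
    refine hφ ⟨v, hv⟩ ?_
    rw [hmemC]
    refine ⟨hv, fun j => ?_⟩
    have h1 := hc' j
    by_cases hj : j = i
    · subst hj
      simp only [Pi.sub_apply, he, Pi.single_eq_same, hsi, mul_one] at h1 ⊢
      omega
    · simpa only [Pi.sub_apply, he, Pi.single_eq_of_ne hj, sub_zero] using h1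
  have hbb : BddBelow Kneg := ⟨0, fun z hz => hKnpos z hz⟩
  have hba : BddAbove Kpos := ⟨φ ⟨v₀, hv₀⟩, fun z hz => hkey z hz _ hKn1⟩
  have hsupinf : sSup Kpos ≤ sInf Kneg :=
    csSup_le hKpne fun z hz => le_csInf hKnne fun z' hz' => hkey z hz z' hz'
  refine ⟨hKnne, hKpne, hKnpos, hbb, hba, hsupinf, ?_⟩
  -- decomposition of elements of W
  have hex : ∀ w : W, ∃ (v : Fin n → ℤ) (k : ℤ), v ∈ V ∧ (w : Fin n → ℤ) = v + k • e := by
    intro w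
    have hw : (w : Fin n → ℤ) ∈ V ⊔ Submodule.span ℤ {e} := by rw [← hW]; exact w.2
    rcases Submodule.mem_sup.mp hw with ⟨y, hy, z, hz, hyz⟩
    rcases Submodule.mem_span_singleton.mp hz with ⟨k, hk⟩
    exact ⟨y, k, hy, by rw [← hyz, hk]⟩
  choose Dv Dk hD1 hD2 using hex
  have huniq : ∀ (v₁ v₂ : Fin n → ℤ) (k₁ k₂ : ℤ), v₁ ∈ V → v₂ ∈ V →
      v₁ + k₁ • e = v₂ + k₂ • e → v₁ = v₂ ∧ k₁ = k₂ := by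
    intro v₁ v₂ k₁ k₂ h₁ h₂ heq
    have heq2 : (k₂ - k₁) • e = v₁ - v₂ := by
      funext j
      have h := congrFun heq j
      simp only [Pi.add_apply, Pi.smul_apply, smul_eq_mul, Pi.sub_apply] at h ⊢
      linear_combination -h
    have hk0 : k₂ - k₁ = 0 := hdisj _ (by rw [he] at heq2 ⊢; rw [heq2]; exact sub_mem h₁ h₂)
    have hkk : k₁ = k₂ := by omega
    subst hkk
    exact ⟨sub_eq_zero.mp (by simpa using heq2.symm), rfl⟩
  set f : W → ℤ := fun w => φ ⟨Dv w, hD1 w⟩ + Dk w * sInf Kneg with hf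
  have hfspec : ∀ (w : W) (v : Fin n → ℤ) (k : ℤ) (hv : v ∈ V),
      (w : Fin n → ℤ) = v + k • e → f w = φ ⟨v, hv⟩ + k * sInf Kneg := by
    intro w v k hv hw
    obtain ⟨h1, h2⟩ := huniq (Dv w) v (Dk w) k (hD1 w) hv ((hD2 w).symm.trans hw)
    subst h1; subst h2
    rfl
  have hfadd : ∀ w₁ w₂ : W, f (w₁ + w₂) = f w₁ + f w₂ := by
    intro w₁ w₂
    have hsum : ((w₁ + w₂ : W) : Fin n → ℤ)
        = (Dv w₁ + Dv w₂) + (Dk w₁ + Dk w₂) • e := by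
      rw [Submodule.coe_add, hD2 w₁, hD2 w₂, add_smul]; abel
    rw [hfspec (w₁ + w₂) _ _ (add_mem (hD1 w₁) (hD1 w₂)) hsum, hf]
    have hsplit : (⟨Dv w₁ + Dv w₂, add_mem (hD1 w₁) (hD1 w₂)⟩ : V)
        = ⟨Dv w₁, hD1 w₁⟩ + ⟨Dv w₂, hD1 w₂⟩ := rfl
    rw [hsplit, map_add]
    ring
  refine ⟨AddMonoidHom.mk' f hfadd, ?_, ?_, ?_⟩
  · intro v hv
    have : f ⟨v, hVW v hv⟩ = φ ⟨v, hv⟩ + 0 * sInf Kneg :=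
      hfspec _ v 0 hv (by simp)
    simpa using this
  · have : f ⟨e, heW⟩ = φ ⟨0, zero_mem V⟩ + 1 * sInf Kneg :=
      hfspec _ 0 1 (zero_mem V) (by simp)
    have h0 : (⟨0, zero_mem V⟩ : V) = 0 := rfl
    rw [h0, map_zero] at this
    simpa using this
  · rintro w hwcone ⟨k, hk3, hkV⟩
    have hwdec : (w : Fin n → ℤ) = ((w : Fin n → ℤ) - k • e) + k • e := by abel
    have hψ : f w = φ ⟨(w : Fin n → ℤ) - k • e, hkV⟩ + k * sInf Kneg :=
      hfspec w _ k hkV hwdec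
    show 0 ≤ f w
    rw [hψ]
    have hwc := ((hmemC W _).mp hwcone).2
    rcases hk3 with rfl | rfl | rfl
    · -- k = -1 : w = v - e with v ∈ V, so φ v ∈ Kneg
      have hvV : (w : Fin n → ℤ) + e ∈ V := by simpa using hkV
      have hmem : φ ⟨(w : Fin n → ℤ) + e, hvV⟩ ∈ Kneg := by
        rw [hKneg]
        exact ⟨_, hvV, rfl, by simpa using hwcone⟩
      have hle : sInf Kneg ≤ φ ⟨(w : Fin n → ℤ) + e, hvV⟩ := csInf_le hbb hmem
      have hsame : (⟨(w : Fin n → ℤ) - (-1 : ℤ) • e, hkV⟩ : V)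
          = ⟨(w : Fin n → ℤ) + e, hvV⟩ := by
        apply Subtype.ext; simp
      rw [hsame]
      linarith
    · -- k = 0 : w ∈ V
      have hvV : (w : Fin n → ℤ) ∈ V := by simpa using hkV
      have hpos : 0 ≤ φ ⟨(w : Fin n → ℤ), hvV⟩ := by
        refine hφ _ ?_
        rw [hmemC]
        exact ⟨hvV, hwc⟩
      have hsame : (⟨(w : Fin n → ℤ) - (0 : ℤ) • e, hkV⟩ : V)
          = ⟨(w : Fin n → ℤ), hvV⟩ := by
        apply Subtype.ext; simp
      rw [hsame]
      linarith
    · -- k = 1 : w = v + e, so -φ v ∈ Kpos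
      have hvV : (w : Fin n → ℤ) - e ∈ V := by simpa using hkV
      have hmem : -φ ⟨(w : Fin n → ℤ) - e, hvV⟩ ∈ Kpos := by
        rw [hKpos]
        exact ⟨_, hvV, rfl, by simpa using hwcone⟩
      have hle : -φ ⟨(w : Fin n → ℤ) - e, hvV⟩ ≤ sInf Kneg :=
        le_csInf hKnne fun z hz => hkey _ hmem z hz
      have hsame : (⟨(w : Fin n → ℤ) - (1 : ℤ) • e, hkV⟩ : V)
          = ⟨(w : Fin n → ℤ) - e, hvV⟩ := by
        apply Subtype.ext; simp
      rw [hsame]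
      linarith
end

section
/- Let W = V ⊕ ℤe_i ⊆ ℤ^n with V having property 𝔓, and suppose ψ : W → ℤ is a homomorphism satisfying ψ(w) ≥ 0 for every w ∈ W_{v₀} whose e_i-coordinate lies in {−1,0,1} (where v₀ has no zero coordinates). If W has property 𝔓, then ψ(w) ≥ 0 for every w ∈ W_{v₀} (arbitrary e_i-coordinate). That is, the 'k = ±1 conditions' imply all conditions. -/
/-- If `W = V ⊕ ℤ·e_i` has property `𝔓` and `ψ : W → ℤ` is non-negative on every element of
`W_{v₀}` whose `e_i`-coordinate lies in `{-1, 0, 1}` (where `v₀ ∈ V` has no zero coordinate),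
then `ψ` is non-negative on all of `W_{v₀}`: the `k = ±1` conditions imply all the others. -/
theorem stmt16 {n : ℕ} (V : Submodule ℤ (Fin n → ℤ)) (hP : HasP V)
    (v₀ : Fin n → ℤ) (hv₀ : v₀ ∈ V) (hnz : ∀ j, v₀ j ≠ 0)
    (i : Fin n) (hi : Pi.single i (1 : ℤ) ∉ V)
    (W : Submodule ℤ (Fin n → ℤ)) (hW : W = V ⊔ Submodule.span ℤ {Pi.single i (1 : ℤ)})
    (hPW : HasP W)
    (ψ : W →+ ℤ)
    (hψ : ∀ w : W, (w : Fin n → ℤ) ∈ cone W v₀ →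
      ((w : Fin n → ℤ) i = -1 ∨ (w : Fin n → ℤ) i = 0 ∨ (w : Fin n → ℤ) i = 1) → 0 ≤ ψ w) :
    ∀ w : W, (w : Fin n → ℤ) ∈ cone W v₀ → 0 ≤ ψ w := by
  have hv₀W : v₀ ∈ W := by rw [hW]; exact Submodule.mem_sup_left hv₀
  have key : ∀ l : Multiset (Fin n → ℤ), (∀ u ∈ l, IsUnitVec u ∧ u ∈ cone W v₀) →
      ∀ w : W, (w : Fin n → ℤ) = l.sum → 0 ≤ ψ w := by
    intro l
    induction l using Multiset.induction with
    | empty =>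
      intro _ w hw
      have : w = 0 := by ext; simpa using congrFun hw _
      simp [this]
    | cons u s ih =>
      intro hl w hw
      have hu := hl u (Multiset.mem_cons_self u s)
      have huW : u ∈ W := hu.2.1
      have hψu : 0 ≤ ψ ⟨u, huW⟩ := hψ ⟨u, huW⟩ hu.2 (hu.1 i)
      have hrest : 0 ≤ ψ (w - ⟨u, huW⟩) := by
        apply ih (fun x hx => hl x (Multiset.mem_cons_of_mem hx))
        simp only [Multiset.sum_cons] at hw
        simp [hw]
      have : ψ w = ψ ⟨u, huW⟩ + ψ (w - ⟨u, huW⟩) := by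
        rw [map_sub]; ring
      rw [this]
      exact add_nonneg hψu hrest
  intro w hw
  obtain ⟨l, hl, hsum⟩ := hPW v₀ hv₀W w hw
  exact key l hl w hsum.symm
end

section
/- A positive T-diagram can be represented by a virtual closed braid only if each of its arrows has a well-defined level; in combinatorial terms: in a virtual braid diagram on k strands with real crossings at distinct heights, the induced T-diagram of its closure (with the k positive markings coming from the closure arcs and arrows from the real crossings) has the property that the arrow of the lowest real crossing has level 1, and inductively every arrow has a level. -/
/-!
Read the closed braid bottom-up. The point just before a point `p` that is not the
lowest point of its strand is the point directly below `p` on the same strand; it is an endpoint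
of a crossing lower than `p`. Hence, once every crossing lower than `p` has been deleted, going
back from `p` one passes only endpoints of deleted arrows until reaching the lowest point of the
strand, which is preceded by the marking of its closure arc. So an arrow is of level one as soon
as all lower arrows are deleted, and strong induction on the height gives every arrow a level.
-/

theorem ZMod.val_sub_one_of_val_ne_zero {N : ℕ} [NeZero N] {p : ZMod N} (hp : p.val ≠ 0) :
    (p - 1).val = p.val - 1 := by
  have hN : N ≠ 1 := by
    rintro rfl
    exact hp (Subsingleton.elim p 0 ▸ ZMod.val_zero)
  rw [ZMod.val_sub (by rw [ZMod.val_one'' hN]; omega), ZMod.val_one'' hN]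

theorem strand_sub_one_eq_and_hgt_lt {N k : ℕ} [NeZero N] {strand : ZMod N → Fin k}
    {hgt : ZMod N → ℕ} {sOrd : Fin k → ℕ}
    (hlex : ∀ p q : ZMod N, (p.val < q.val ↔
      (sOrd (strand p) < sOrd (strand q) ∨ (strand p = strand q ∧ hgt p < hgt q))))
    {p q : ZMod N} (hq : strand q = strand p) (hlt : hgt q < hgt p) :
    strand (p - 1) = strand p ∧ hgt (p - 1) < hgt p := by
  have hqp : q.val < p.val := (hlex q p).2 (Or.inr ⟨hq, hlt⟩)
  have hpred : (p - 1).val = p.val - 1 := ZMod.val_sub_one_of_val_ne_zero (by omega)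
  rcases (hlex (p - 1) p).1 (by omega) with hs | hs
  · rw [← hq] at hs
    have := (hlex (p - 1) q).2 (Or.inl hs)
    omega
  · exact hs

namespace GaussDiagram

variable {n : ℕ} (G : GaussDiagram n) (m : ZMod (2 * n) → ℕ)

theorem exists_endpoint_eq [NeZero n] (p : ZMod (2 * n)) :
    ∃ a, G.head a = p ∨ G.tail a = p := by
  have hbij : Function.Bijective (Sum.elim G.head G.tail) := by
    rw [Fintype.bijective_iff_injective_and_card]
    exact ⟨G.inj, by simp [ZMod.card]; omega⟩
  obtain ⟨a | a, ha⟩ := hbij.2 p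
  · exact ⟨a, Or.inl ha⟩
  · exact ⟨a, Or.inr ha⟩

theorem removedAt_mono : Monotone (G.removedAt m) :=
  monotone_nat_of_le_succ fun _ => Set.subset_union_left

theorem exists_forall_mem_removedAt {P : Fin n → Prop} (h : ∀ a, P a → G.HasLevel m a) :
    ∃ K, ∀ a, P a → a ∈ G.removedAt m K := by
  classical
  choose! f hf using h
  exact ⟨Finset.univ.sup f, fun a ha =>
    G.removedAt_mono m (Finset.le_sup (Finset.mem_univ a)) (hf a ha)⟩

variable {m}

theorem precededBy_of_pos {R : Set (Fin n)} {p : ZMod (2 * n)} (h : 0 < m (p - 1)) :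
    G.precededBy m R p :=
  ⟨0, by simpa using h, fun _ hi => absurd hi (Nat.not_lt_zero _)⟩

theorem precededBy_of_precededBy_sub_one {R : Set (Fin n)} {p : ZMod (2 * n)} {a : Fin n}
    (hp : G.precededBy m R (p - 1)) (ha : a ∈ R) (hend : G.head a = p - 1 ∨ G.tail a = p - 1) :
    G.precededBy m R p := by
  obtain ⟨j, hj, hR⟩ := hp
  refine ⟨j + 1, by convert hj using 2; push_cast; ring, ?_⟩
  rintro (_ | i) hi
  · exact ⟨a, ha, by simpa using hend⟩
  · obtain ⟨b, hb, hend⟩ := hR i (by omega)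
    exact ⟨b, hb, by convert hend using 2 <;> push_cast <;> ring⟩

section ClosedBraid

variable {k : ℕ} [NeZero n] {strand : ZMod (2 * n) → Fin k} {hgt : ZMod (2 * n) → ℕ}
  {sOrd : Fin k → ℕ}
  (hgt_tail : ∀ a, hgt (G.head a) = hgt (G.tail a))
  (hlex : ∀ p q : ZMod (2 * n), (p.val < q.val ↔
      (sOrd (strand p) < sOrd (strand q) ∨ (strand p = strand q ∧ hgt p < hgt q))))
  (hmark : ∀ p : ZMod (2 * n), (∀ q, strand q = strand p → hgt p ≤ hgt q) → 0 < m (p - 1))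
include hgt_tail hlex hmark

theorem precededBy_of_lower_mem {R : Set (Fin n)} (p : ZMod (2 * n))
    (hR : ∀ b, hgt (G.head b) < hgt p → b ∈ R) : G.precededBy m R p := by
  induction hp : hgt p using Nat.strong_induction_on generalizing p with
  | _ h ih =>
    by_cases hlowest : ∀ q, strand q = strand p → hgt p ≤ hgt q
    · exact G.precededBy_of_pos (hmark p hlowest)
    push Not at hlowest
    obtain ⟨q, hq, hlt⟩ := hlowest
    have hbelow := (strand_sub_one_eq_and_hgt_lt hlex hq hlt).2
    obtain ⟨b, hb⟩ := G.exists_endpoint_eq (p - 1)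
    have hb_lt : hgt (G.head b) < hgt p := by
      rcases hb with hb | hb <;> simpa [hgt_tail, hb] using hbelow
    exact G.precededBy_of_precededBy_sub_one
      (ih _ (hp ▸ hbelow) (p - 1) (fun c hc => hR c (hc.trans hbelow)) rfl) (hR b hb_lt) hb

theorem mem_removedAt_succ_of_lower_mem {K : ℕ} (a : Fin n)
    (hK : ∀ b, hgt (G.head b) < hgt (G.head a) → b ∈ G.removedAt m K) :
    a ∈ G.removedAt m (K + 1) :=
  Or.inr ⟨G.precededBy_of_lower_mem hgt_tail hlex hmark _ hK,
    G.precededBy_of_lower_mem hgt_tail hlex hmark _ fun b hb => hK b (hgt_tail a ▸ hb)⟩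

theorem hasLevel_of_closedBraid (a : Fin n) : G.HasLevel m a := by
  induction ha : hgt (G.head a) using Nat.strong_induction_on generalizing a with
  | _ h ih =>
    obtain ⟨K, hK⟩ := G.exists_forall_mem_removedAt m
      (P := fun b => hgt (G.head b) < hgt (G.head a)) fun b hb => ih _ (ha ▸ hb) b rfl
    exact ⟨K + 1, G.mem_removedAt_succ_of_lower_mem hgt_tail hlex hmark a hK⟩

end ClosedBraid

end GaussDiagram

/-- The braid structure is encoded by a strand function and a height function on the circle
points: the two endpoints of each arrow (real crossing) have the same height, the cyclic order of
the points is the lexicographic order (position of the strand along the closure, height), and the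
lowest point of each strand is directly preceded by a (positive) marking coming from the closure
arcs. -/
theorem stmt17_general (n k : ℕ) (G : GaussDiagram n) (m : ZMod (2 * n) → ℕ)
    (strand : ZMod (2 * n) → Fin k) (hgt : ZMod (2 * n) → ℕ) (sOrd : Fin k → ℕ)
    (h1 : ∀ a, hgt (G.head a) = hgt (G.tail a))
    (h4 : ∀ p q : ZMod (2 * n), (p.val < q.val ↔
      (sOrd (strand p) < sOrd (strand q) ∨ (strand p = strand q ∧ hgt p < hgt q))))
    (h5 : ∀ p : ZMod (2 * n), (∀ q, strand q = strand p → hgt p ≤ hgt q) → 0 < m (p - 1)) :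
    (∀ a, (∀ b, hgt (G.head a) ≤ hgt (G.head b)) → a ∈ G.removedAt m 1) ∧
    ∀ a, G.HasLevel m a := by
  rcases n.eq_zero_or_pos with rfl | hn
  · exact ⟨fun a => a.elim0, fun a => a.elim0⟩
  have : NeZero n := ⟨hn.ne'⟩
  refine ⟨fun a ha => ?_, G.hasLevel_of_closedBraid h1 h4 h5⟩
  exact G.mem_removedAt_succ_of_lower_mem h1 h4 h5 (K := 0) a fun b hb =>
    absurd (ha b) hb.not_ge

/-- The T-diagram of the closure of a virtual braid on `k` strands has all its arrows leveled.
The braid structure is encoded by a strand function and a height function on the circle points: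
the two endpoints of each arrow (real crossing) have the same height and lie on different
strands, distinct crossings occur at distinct heights, the cyclic order of the points is the
lexicographic order (position of the strand along the closure, height), and the lowest point of
each strand is directly preceded by a (positive) marking coming from the closure arcs.  Then the
arrow of the lowest real crossing has level `1`, and every arrow has a well-defined level. -/
theorem stmt17 (n k : ℕ) (G : GaussDiagram n) (m : ZMod (2 * n) → ℕ)
    (strand : ZMod (2 * n) → Fin k) (hgt : ZMod (2 * n) → ℕ) (sOrd : Fin k → ℕ)
    (hso : Function.Injective sOrd)
    (h1 : ∀ a, hgt (G.head a) = hgt (G.tail a))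
    (h2 : ∀ a, strand (G.head a) ≠ strand (G.tail a))
    (h3 : ∀ a b, a ≠ b → hgt (G.head a) ≠ hgt (G.head b))
    (h4 : ∀ p q : ZMod (2 * n), (p.val < q.val ↔
      (sOrd (strand p) < sOrd (strand q) ∨ (strand p = strand q ∧ hgt p < hgt q))))
    (h5 : ∀ p : ZMod (2 * n), (∀ q, strand q = strand p → hgt p ≤ hgt q) → 0 < m (p - 1)) :
    (∀ a, (∀ b, hgt (G.head a) ≤ hgt (G.head b)) → a ∈ G.removedAt m 1) ∧
    ∀ a, G.HasLevel m a :=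
  stmt17_general n k G m strand hgt sOrd h1 h4 h5
end
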